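/- arXiv:2405.15648 — 3 statements merged into one kernel-verified Lean document; each statement's English description precedes it below -/
import Mathlib

section
/- Let p be an odd prime and let k, k' ∈ ZMod p with k ≠ k'. Then there exists an invertible map F on functions G × G → ℂ (with n = p) that is a finite composition of the operators S, T and T⁻¹, such that F (Z j) = Z (k + k' - j) for every j : ZMod p. In particular F (Z k) = Z k', F (Z k') = Z k, and F ∘ F fixes every Z j; i.e. any two ℤ_p×ℤ_p SPT phases of distinct levels are exchanged by a duality operation built from gauging and SPT stacking. (An explicit choice is F = T^{k+k'-1} ∘ S ∘ T ∘ S ∘ T⁻¹ ∘ S.) -/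
/-!
Torus partition functions of (1+1)d theories with ℤ_n×ℤ_n symmetry,
modeled as functions `GG n × GG n → ℂ` where `GG n := ZMod n × ZMod n`
records the holonomies of each ℤ_n background gauge field around the
two cycles of the torus.
-/

noncomputable section

/-- The holonomy group of one ℤ_n background gauge field on the torus. -/
abbrev GG (n : ℕ) := ZMod n × ZMod n

/-- The intersection pairing `ε a b = a₁ b₂ - a₂ b₁`. -/
def epsPair {n : ℕ} (a b : GG n) : ZMod n := a.1 * b.2 - a.2 * b.1

/-- The character `e x = exp(2πi x.val / n)`. -/
def eChar (n : ℕ) (x : ZMod n) : ℂ :=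
  Complex.exp (2 * Real.pi * Complex.I * (x.val : ℂ) / n)

/-- The gauging operation `S` on torus partition functions. -/
def gaugeS (n : ℕ) [NeZero n] (f : GG n × GG n → ℂ) : GG n × GG n → ℂ :=
  fun P => (n : ℂ)⁻¹ * (n : ℂ)⁻¹ *
    ∑ a : GG n, ∑ b : GG n, f (a, b) * eChar n (epsPair a P.2 + epsPair b P.1)

/-- The SPT-stacking operation `T` on torus partition functions. -/
def stackT (n : ℕ) (f : GG n × GG n → ℂ) : GG n × GG n → ℂ :=
  fun P => f P * eChar n (epsPair P.1 P.2)

/-- The inverse SPT-stacking operation `T⁻¹` on torus partition functions. -/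
def stackTinv (n : ℕ) (f : GG n × GG n → ℂ) : GG n × GG n → ℂ :=
  fun P => f P * eChar n (-(epsPair P.1 P.2))

/-- The torus partition function of the level-`k` ℤ_n×ℤ_n SPT phase. -/
def Zspt (n : ℕ) (k : ZMod n) : GG n × GG n → ℂ :=
  fun P => eChar n (k * epsPair P.1 P.2)

/-- `IsManip n F` holds when `F` is a finite composition of the gauging
operation `S`, the SPT-stacking operation `T`, and its inverse `T⁻¹`. -/
inductive IsManip (n : ℕ) [NeZero n] :
    ((GG n × GG n → ℂ) → (GG n × GG n → ℂ)) → Prop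
  | id : IsManip n id
  | comp_S {F} : IsManip n F → IsManip n (gaugeS n ∘ F)
  | comp_T {F} : IsManip n F → IsManip n (stackT n ∘ F)
  | comp_Tinv {F} : IsManip n F → IsManip n (stackTinv n ∘ F)

/-!
Gauging is a Fourier transform on `GG n × GG n` for the symplectic pairing `crossPair`, so
`S ∘ S = id`, and stacking shifts the level: `T (Z j) = Z (j + 1)`. Gauging inverts the level of
an SPT phase, `S (Z j) = Z j⁻¹` for a unit `j`, and sends `Z 0` to the completely broken phase
`Zssb`, which `T` fixes. So for a prime `p`, `S` and `T` act on the levels as the Möbius maps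
`j ↦ 1 / j` and `j ↦ j + 1` of the projective line over `𝔽_p`, with `Zssb` at infinity. The word
`S T S T⁻¹ S` then acts as `j ↦ 1 - j`, and `T ^ (k + k' - 1)` turns this into `j ↦ k + k' - j`.
-/

variable {n : ℕ}

lemma epsPair_smul_left (c : ZMod n) (a b : GG n) : epsPair (c • a) b = c * epsPair a b := by
  simp only [epsPair, Prod.smul_fst, Prod.smul_snd, smul_eq_mul]
  ring

def crossPair (x y : GG n × GG n) : ZMod n := epsPair x.1 y.2 + epsPair x.2 y.1

lemma crossPair_add_crossPair (x y P : GG n × GG n) :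
    crossPair x y + crossPair y P = crossPair y (P - x) := by
  simp only [crossPair, epsPair, Prod.fst_sub, Prod.snd_sub]
  ring

variable [NeZero n]

lemma eChar_eq_stdAddChar (x : ZMod n) : eChar n x = ZMod.stdAddChar x := by
  rw [eChar, ZMod.stdAddChar_apply, ZMod.toCircle_apply]

lemma eChar_add (x y : ZMod n) : eChar n (x + y) = eChar n x * eChar n y := by
  simp only [eChar_eq_stdAddChar, AddChar.map_add_eq_mul]

lemma eChar_zero : eChar n 0 = 1 := by
  simp only [eChar_eq_stdAddChar, AddChar.map_zero_eq_one]

lemma sum_eChar_mul (c : ZMod n) :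
    ∑ x : ZMod n, eChar n (x * c) = if c = 0 then (n : ℂ) else 0 := by
  simp_rw [eChar_eq_stdAddChar]
  rw [AddChar.sum_mulShift c (ZMod.isPrimitive_stdAddChar n)]
  simp [ZMod.card]

lemma sum_eChar_epsPair (v : GG n) :
    ∑ a : GG n, eChar n (epsPair a v) = if v = 0 then (n : ℂ) ^ 2 else 0 := by
  have hsplit : ∀ x y : ZMod n,
      eChar n (epsPair (x, y) v) = eChar n (x * v.2) * eChar n (y * -v.1) := by
    intro x y
    rw [← eChar_add, epsPair]
    ring_nf
  simp_rw [Fintype.sum_prod_type, hsplit, ← Finset.sum_mul_sum, sum_eChar_mul, neg_eq_zero]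
  by_cases h1 : v.1 = 0 <;> by_cases h2 : v.2 = 0 <;> simp [h1, h2, Prod.ext_iff, sq]

lemma sum_eChar_crossPair (V : GG n × GG n) :
    ∑ x : GG n × GG n, eChar n (crossPair x V) = if V = 0 then (n : ℂ) ^ 2 * n ^ 2 else 0 := by
  rw [Fintype.sum_prod_type]
  simp_rw [crossPair, eChar_add]
  rw [← Finset.sum_mul_sum, sum_eChar_epsPair, sum_eChar_epsPair]
  by_cases h1 : V.1 = 0 <;> by_cases h2 : V.2 = 0 <;> simp [h1, h2, Prod.ext_iff]

lemma gaugeS_eq (f : GG n × GG n → ℂ) (P : GG n × GG n) :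
    gaugeS n f P = (n : ℂ)⁻¹ * (n : ℂ)⁻¹ * ∑ x, f x * eChar n (crossPair x P) := by
  rw [gaugeS, Fintype.sum_prod_type (f := fun x => f x * eChar n (crossPair x P))]
  rfl

lemma gaugeS_gaugeS (f : GG n × GG n → ℂ) : gaugeS n (gaugeS n f) = f := by
  funext P
  have hn : (n : ℂ) ≠ 0 := NeZero.ne _
  calc gaugeS n (gaugeS n f) P
      = ∑ x, ∑ y, ((n : ℂ) ^ 2 * n ^ 2)⁻¹ * (f x * eChar n (crossPair y (P - x))) := by
        simp only [gaugeS_eq, Finset.mul_sum, Finset.sum_mul]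
        rw [Finset.sum_comm]
        refine Finset.sum_congr rfl fun x _ => Finset.sum_congr rfl fun y _ => ?_
        rw [← crossPair_add_crossPair, eChar_add]
        ring
    _ = ((n : ℂ) ^ 2 * n ^ 2)⁻¹ * ∑ x, f x * ∑ y, eChar n (crossPair y (P - x)) := by
        simp only [Finset.mul_sum]
    _ = f P := by
        simp_rw [sum_eChar_crossPair, sub_eq_zero, mul_ite, mul_zero, Finset.sum_ite_eq,
          Finset.mem_univ, if_true]
        field_simp

lemma gaugeS_involutive : Function.Involutive (gaugeS n) := gaugeS_gaugeS

lemma stackTinv_stackT (f : GG n × GG n → ℂ) : stackTinv n (stackT n f) = f := by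
  funext P
  simp only [stackTinv, stackT, mul_assoc, ← eChar_add, add_neg_cancel, eChar_zero, mul_one]

lemma stackT_stackTinv (f : GG n × GG n → ℂ) : stackT n (stackTinv n f) = f := by
  funext P
  simp only [stackTinv, stackT, mul_assoc, ← eChar_add, neg_add_cancel, eChar_zero, mul_one]

lemma stackT_bijective : Function.Bijective (stackT n) :=
  Function.bijective_iff_has_inverse.mpr ⟨stackTinv n, stackTinv_stackT, stackT_stackTinv⟩

lemma stackTinv_bijective : Function.Bijective (stackTinv n) :=
  Function.bijective_iff_has_inverse.mpr ⟨stackT n, stackT_stackTinv, stackTinv_stackT⟩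

lemma IsManip.bijective {F : (GG n × GG n → ℂ) → (GG n × GG n → ℂ)} (h : IsManip n F) :
    Function.Bijective F := by
  induction h with
  | id => exact Function.bijective_id
  | comp_S _ ih => exact gaugeS_involutive.bijective.comp ih
  | comp_T _ ih => exact stackT_bijective.comp ih
  | comp_Tinv _ ih => exact stackTinv_bijective.comp ih

lemma IsManip.iterate_stackT_comp {F : (GG n × GG n → ℂ) → (GG n × GG n → ℂ)}
    (h : IsManip n F) (m : ℕ) : IsManip n ((stackT n)^[m] ∘ F) := by
  induction m with
  | zero => exact h
  | succ m ih => rw [Function.iterate_succ', Function.comp_assoc]; exact ih.comp_T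

lemma stackT_Zspt (j : ZMod n) : stackT n (Zspt n j) = Zspt n (j + 1) := by
  funext P
  rw [stackT, Zspt, Zspt, ← eChar_add, add_one_mul]

lemma stackTinv_Zspt (j : ZMod n) : stackTinv n (Zspt n j) = Zspt n (j - 1) := by
  rw [← stackTinv_stackT (Zspt n (j - 1)), stackT_Zspt, sub_add_cancel]

lemma iterate_stackT_Zspt (m : ℕ) (j : ZMod n) :
    (stackT n)^[m] (Zspt n j) = Zspt n (j + m) := by
  induction m with
  | zero => simp
  | succ m ih => rw [Function.iterate_succ_apply', ih, stackT_Zspt, Nat.cast_succ, add_assoc]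

/-- The phase with `ℤ_n × ℤ_n` completely broken: `n²` vacua, and every nontrivial background
is forbidden. -/
def Zssb (n : ℕ) : GG n × GG n → ℂ := fun P => if P = 0 then (n : ℂ) ^ 2 else 0

lemma gaugeS_Zspt_zero : gaugeS n (Zspt n 0) = Zssb n := by
  funext P
  have hn : (n : ℂ) ≠ 0 := NeZero.ne _
  simp only [gaugeS_eq, Zspt, zero_mul, eChar_zero, one_mul, sum_eChar_crossPair, Zssb]
  split_ifs
  · field_simp
  · rw [mul_zero]

lemma gaugeS_Zssb : gaugeS n (Zssb n) = Zspt n 0 := by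
  rw [← gaugeS_Zspt_zero, gaugeS_gaugeS]

lemma stackT_Zssb : stackT n (Zssb n) = Zssb n := by
  funext P
  by_cases hP : P = 0
  · simp [stackT, hP, epsPair, eChar_zero]
  · simp [stackT, Zssb, hP]

lemma stackTinv_Zssb : stackTinv n (Zssb n) = Zssb n := by
  conv_lhs => rw [← stackT_Zssb]
  exact stackTinv_stackT _

lemma gaugeS_Zspt_of_isUnit {j : ZMod n} (hj : IsUnit j) : gaugeS n (Zspt n j) = Zspt n j⁻¹ := by
  obtain ⟨u, rfl⟩ := hj
  funext ⟨A, B⟩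
  have hn : (n : ℂ) ≠ 0 := NeZero.ne _
  -- summing over `b` first pins `a` to the unique solution of `u • a = A`
  have hshift : ∀ a b : GG n, Zspt n u (a, b) * eChar n (epsPair a B + epsPair b A)
      = eChar n (epsPair a B) * eChar n (epsPair b (A - u • a)) := by
    intro a b
    rw [Zspt, ← eChar_add, ← eChar_add, Units.smul_def]
    congr 1
    simp only [epsPair, Prod.fst_sub, Prod.snd_sub, Prod.smul_fst, Prod.smul_snd, smul_eq_mul]
    ring
  have hsolve : ∀ a : GG n, A - u • a = 0 ↔ a = u⁻¹ • A := by
    intro a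
    rw [sub_eq_zero, eq_inv_smul_iff, eq_comm]
  simp_rw [gaugeS, hshift, ← Finset.mul_sum, sum_eChar_epsPair, hsolve, mul_ite, mul_zero,
    Finset.sum_ite_eq', Finset.mem_univ, if_true, Units.smul_def, epsPair_smul_left,
    ZMod.inv_coe_unit, Zspt]
  field_simp

def levelReflection (n : ℕ) [NeZero n] : (GG n × GG n → ℂ) → (GG n × GG n → ℂ) :=
  gaugeS n ∘ stackT n ∘ gaugeS n ∘ stackTinv n ∘ gaugeS n

lemma isManip_levelReflection : IsManip n (levelReflection n) :=
  IsManip.id.comp_S.comp_Tinv.comp_S.comp_T.comp_S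

lemma levelReflection_Zspt {p : ℕ} [Fact p.Prime] (j : ZMod p) :
    levelReflection p (Zspt p j) = Zspt p (1 - j) := by
  have gaugeS_Zspt {i : ZMod p} (hi : i ≠ 0) : gaugeS p (Zspt p i) = Zspt p i⁻¹ :=
    gaugeS_Zspt_of_isUnit hi.isUnit
  simp only [levelReflection, Function.comp_apply]
  rcases eq_or_ne j 0 with rfl | hj0
  · rw [gaugeS_Zspt_zero, stackTinv_Zssb, gaugeS_Zssb, stackT_Zspt, zero_add,
      gaugeS_Zspt one_ne_zero, inv_one, sub_zero]
  rcases eq_or_ne j 1 with rfl | hj1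
  · rw [gaugeS_Zspt one_ne_zero, inv_one, stackTinv_Zspt, sub_self, gaugeS_Zspt_zero,
      stackT_Zssb, gaugeS_Zssb]
  have h1j : 1 - j ≠ 0 := sub_ne_zero.mpr hj1.symm
  have hinv : j⁻¹ - 1 ≠ 0 := sub_ne_zero.mpr (inv_ne_one.mpr hj1)
  have hstep : (j⁻¹ - 1)⁻¹ + 1 = (1 - j)⁻¹ := by
    field_simp
    ring
  rw [gaugeS_Zspt hj0, stackTinv_Zspt, gaugeS_Zspt hinv, stackT_Zspt, hstep,
    gaugeS_Zspt (inv_ne_zero h1j), inv_inv]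

theorem duality_between_distinct_SPTs_odd_prime_general (p : ℕ) [Fact p.Prime]
    (k k' : ZMod p) :
    ∃ F : (GG p × GG p → ℂ) → (GG p × GG p → ℂ),
      IsManip p F ∧ Function.Bijective F ∧
      (∀ j : ZMod p, F (Zspt p j) = Zspt p (k + k' - j)) ∧
      F (Zspt p k) = Zspt p k' ∧ F (Zspt p k') = Zspt p k ∧
      (∀ j : ZMod p, F (F (Zspt p j)) = Zspt p j) := by
  have hF : IsManip p ((stackT p)^[(k + k' - 1).val] ∘ levelReflection p) :=
    isManip_levelReflection.iterate_stackT_comp _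
  have hZ : ∀ j : ZMod p,
      ((stackT p)^[(k + k' - 1).val] ∘ levelReflection p) (Zspt p j) = Zspt p (k + k' - j) := by
    intro j
    rw [Function.comp_apply, levelReflection_Zspt, iterate_stackT_Zspt, ZMod.natCast_zmod_val]
    ring_nf
  refine ⟨_, hF, hF.bijective, hZ, ?_, ?_, fun j => ?_⟩
  · rw [hZ, add_sub_cancel_left]
  · rw [hZ, add_sub_cancel_right]
  · rw [hZ, hZ, sub_sub_cancel]

/-- for an odd prime `p` and distinct levels `k ≠ k'` in `ZMod p`,
there is an invertible topological manipulation `F`, a finite composition of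
`S`, `T` and `T⁻¹`, with `F (Z j) = Z (k + k' - j)` for every level `j`; in
particular `F` exchanges `Z k` and `Z k'`, and `F ∘ F` fixes every `Z j`.
Thus any two ℤ_p×ℤ_p SPT phases of distinct levels are exchanged by a duality
operation built from gauging and SPT stacking. -/
theorem duality_between_distinct_SPTs_odd_prime (p : ℕ) [Fact p.Prime]
    (hodd : Odd p) (k k' : ZMod p) (hkk' : k ≠ k') :
    ∃ F : (GG p × GG p → ℂ) → (GG p × GG p → ℂ),
      IsManip p F ∧ Function.Bijective F ∧
      (∀ j : ZMod p, F (Zspt p j) = Zspt p (k + k' - j)) ∧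
      F (Zspt p k) = Zspt p k' ∧ F (Zspt p k') = Zspt p k ∧
      (∀ j : ZMod p, F (F (Zspt p j)) = Zspt p j) :=
  duality_between_distinct_SPTs_odd_prime_general p k k'

end
end

section
/- Let G := ZMod 2 × ZMod 2 × ZMod 2 (an additive group) and define ω : G → G → G → ℂ by ω a b c := (-1 : ℂ)^((a.1 * b.2.1 * c.2.2).val). Then (i) ω satisfies the multiplicative 3-cocycle identity ω b c d * ω a (b + c) d * ω a b c = ω (a + b) c d * ω a b (c + d) for all a b c d : G, and (ii) ω is not a coboundary: there is no function β : G → G → ℂˣ such that ω a b c = (β b c : ℂ) * (β (a + b) c : ℂ)⁻¹ * (β a (b + c) : ℂ) * (β a b : ℂ)⁻¹ for all a b c : G. Hence the ℤ₂^A×ℤ₂^B×ℤ₂^C symmetry with this cocycle carries a nontrivial ('t Hooft) mixed anomaly. -/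
/-!
`ω` is a character of `ZMod 2` composed with the trilinear form `a₁ b₂ c₃`, hence a 3-cocycle.
On an abelian group the product of a coboundary over the cyclic permutations of `(x, y, z)`
equals its product over the transpositions, while for `ω` at the three standard generators
these products are `-1` and `1`.
-/

/-- The type-III anomaly 3-cocycle `ω = (-1)^{∫ A B C}` of the
ℤ₂^A×ℤ₂^B×ℤ₂^C symmetry, on `G = ZMod 2 × ZMod 2 × ZMod 2`. -/
def typeIIICocycle (a b c : ZMod 2 × ZMod 2 × ZMod 2) : ℂ :=
  (-1 : ℂ) ^ ((a.1 * b.2.1 * c.2.2).val)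

section GroupCohomology

variable {G M : Type*} [AddCommGroup G]

def IsThreeCocycle [Mul M] (ω : G → G → G → M) : Prop :=
  ∀ a b c d, ω b c d * ω a (b + c) d * ω a b c = ω (a + b) c d * ω a b (c + d)

def coboundary [Group M] (β : G → G → M) (a b c : G) : M :=
  β b c * (β (a + b) c)⁻¹ * β a (b + c) * (β a b)⁻¹

theorem isThreeCocycle_addChar_comp {A : Type*} [AddCommMonoid A] [CommMonoid M]
    (ψ : AddChar A M) {f : G → G → G → A}
    (hf₁ : ∀ a a' b c, f (a + a') b c = f a b c + f a' b c)
    (hf₂ : ∀ a b b' c, f a (b + b') c = f a b c + f a b' c)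
    (hf₃ : ∀ a b c c', f a b (c + c') = f a b c + f a b c') :
    IsThreeCocycle fun a b c => ψ (f a b c) := by
  intro a b c d
  simp only [← AddChar.map_add_eq_mul, hf₁, hf₂, hf₃]
  congr 1
  abel

/-- Every `β u v` and every `β (u + v) w` occurs with the same exponent on both sides, up to the
order of summands. -/
theorem coboundary_mul_cyclic_eq_mul_transpositions [CommGroup M] (β : G → G → M) (x y z : G) :
    coboundary β x y z * coboundary β y z x * coboundary β z x y =
      coboundary β x z y * coboundary β y x z * coboundary β z y x := by
  simp only [coboundary, add_comm y x, add_comm z x, add_comm z y]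
  apply Additive.ofMul.injective
  simp only [ofMul_mul, ofMul_inv]
  abel

theorem not_exists_eq_coboundary_of_mul_cyclic_ne {K : Type*} [DivisionCommMonoid K]
    {ω : G → G → G → K} (x y z : G)
    (hω : ω x y z * ω y z x * ω z x y ≠ ω x z y * ω y x z * ω z y x) :
    ¬ ∃ β : G → G → Kˣ, ∀ a b c : G,
      ω a b c = (β b c : K) * (β (a + b) c : K)⁻¹ * (β a (b + c) : K) * (β a b : K)⁻¹ := by
  rintro ⟨β, hβ⟩
  have hω_eq : ∀ a b c, ω a b c = ((coboundary β a b c : Kˣ) : K) := by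
    simp [coboundary, hβ]
  apply hω
  simp only [hω_eq, ← Units.val_mul]
  rw [coboundary_mul_cyclic_eq_mul_transpositions]

end GroupCohomology

theorem typeIIICocycle_eq_zmodChar (a b c : ZMod 2 × ZMod 2 × ZMod 2) :
    typeIIICocycle a b c = AddChar.zmodChar 2 (neg_one_sq (R := ℂ)) (a.1 * b.2.1 * c.2.2) :=
  rfl

/-- the type-III cocycle `ω a b c = (-1)^{a₁ b₂ c₃}` on
`G = ZMod 2 × ZMod 2 × ZMod 2` satisfies the multiplicative 3-cocycle identity
but is not the coboundary of any 2-cochain `β : G → G → ℂˣ`; hence the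
ℤ₂^A×ℤ₂^B×ℤ₂^C symmetry carries a nontrivial ('t Hooft) mixed anomaly. -/
theorem typeIII_anomaly_nontrivial :
    (∀ a b c d : ZMod 2 × ZMod 2 × ZMod 2,
      typeIIICocycle b c d * typeIIICocycle a (b + c) d * typeIIICocycle a b c =
        typeIIICocycle (a + b) c d * typeIIICocycle a b (c + d)) ∧
    ¬ ∃ β : (ZMod 2 × ZMod 2 × ZMod 2) → (ZMod 2 × ZMod 2 × ZMod 2) → ℂˣ,
      ∀ a b c : ZMod 2 × ZMod 2 × ZMod 2,
        typeIIICocycle a b c =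
          (β b c : ℂ) * ((β (a + b) c : ℂ))⁻¹ * (β a (b + c) : ℂ) *
            ((β a b : ℂ))⁻¹ := by
  constructor
  · simp only [typeIIICocycle_eq_zmodChar]
    exact isThreeCocycle_addChar_comp _ (fun _ _ _ _ => by simp only [Prod.fst_add]; ring)
      (fun _ _ _ _ => by simp only [Prod.fst_add, Prod.snd_add]; ring)
      (fun _ _ _ _ => by simp only [Prod.snd_add]; ring)
  · refine not_exists_eq_coboundary_of_mul_cyclic_ne (1, 0, 0) (0, 1, 0) (0, 0, 1) ?_
    norm_num [typeIIICocycle, ZMod.val_one]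
end

section
/- Fix an even integer N ≥ 4 and let V := ∏_{j : Fin N} Matrix.exp ((π * Complex.I / 4) • (1 + (ε j : ℂ) • (Z j * Z (j + 1)))) (the factors pairwise commute, so the product over Fin N is unambiguous, e.g. as Finset.noncommProd). Then V is invertible, V commutes with every Z j, and for every j : Fin N one has V * X j * V⁻¹ = Z (j - 1) * X j * Z (j + 1). Hence V is a finite-depth local unitary realizing the SPT-stacking operation T: σ_j^x ↦ σ_{j-1}^z σ_j^x σ_{j+1}^z. -/
/-!
Every factor of the entangler is the exponential of a diagonal matrix, so `V` is diagonal in the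
spin basis, with entry `∏ⱼ exp (π i (1 + xⱼ) / 4)` at `s`, where `xⱼ = ε j zⱼ zⱼ₊₁ = ±1`. Hence `V`
is invertible and commutes with the `Z j`, and `V X_j V⁻¹` has the entries of `X_j` multiplied by
the ratio of the phases at `s` and at `s` with spin `j` flipped. Only the bonds `(j - 1, j)` and
`(j, j + 1)` feel the flip; each changes `x` to `-x` and so contributes `exp (π i x / 2) = i x`.
As `N` is even, `ε (j - 1) = -ε j`, and the two factors multiply to `z_{j-1} z_{j+1}`.
-/

noncomputable section

open NormedSpace  -- for the exponential `exp 𝕂`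

/-- Spin configurations of a periodic chain of `N` qubits. -/
abbrev Conf (N : ℕ) := Fin N → Fin 2

/-- The Pauli-z operator at site `j`: the diagonal matrix with
`(Z j) s s = (-1)^(s j)`. -/
def PZ (N : ℕ) (j : Fin N) : Matrix (Conf N) (Conf N) ℂ :=
  Matrix.diagonal (fun s => (-1 : ℂ) ^ ((s j : ℕ)))

/-- The Pauli-x operator at site `j`: `(X j) s t = 1` if `t` agrees with `s`
at every site other than `j` and `t j ≠ s j`, and `0` otherwise. -/
def PX (N : ℕ) (j : Fin N) : Matrix (Conf N) (Conf N) ℂ :=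
  fun s t => if (∀ i, i ≠ j → t i = s i) ∧ t j ≠ s j then 1 else 0

/-- The sign `ε j = (-1)^j`, well defined on `Fin N` for even `N`. -/
def epsSign (N : ℕ) (j : Fin N) : ℂ := (-1 : ℂ) ^ ((j : ℕ))

/-- The SPT entangler
`V = ∏_{j : Fin N} exp((πi/4) • (1 + ε j • (Z j * Z (j+1))))`.
All factors are pairwise commuting, so the product over `Fin N` is
unambiguous; we realize it as the ordered product of the list of factors. -/
def entangler (N : ℕ) [NeZero N] : Matrix (Conf N) (Conf N) ℂ :=
  (List.ofFn (fun j : Fin N =>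
    exp (((Real.pi : ℂ) * Complex.I / 4) •
      ((1 : Matrix (Conf N) (Conf N) ℂ) +
        epsSign N j • (PZ N j * PZ N (j + 1)))))).prod

open Matrix Complex Real

section Diagonal

variable {n K : Type*} [Fintype n] [DecidableEq n]

lemma Matrix.prod_ofFn_diagonal [CommSemiring K] {m : ℕ} (d : Fin m → n → K) :
    (List.ofFn fun i => diagonal (d i)).prod = diagonal fun s => ∏ i, d i s := by
  have h := map_list_prod (diagonalRingHom n K) (List.ofFn d)
  rw [← Finset.prod_fn]
  simpa [List.map_ofFn, List.prod_ofFn, Function.comp_def] using h.symm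

lemma Matrix.diagonal_mul_mul_inv_diagonal [Field K] {d : n → K} (hd : ∀ s, d s ≠ 0)
    (M : Matrix n n K) :
    diagonal d * M * (diagonal d)⁻¹ = of fun s t => d s * M s t / d t := by
  have hinv : (diagonal d)⁻¹ = diagonal d⁻¹ :=
    inv_eq_right_inv (by rw [diagonal_mul_diagonal, ← diagonal_one]; simp [hd])
  ext s t
  simp [hinv, div_eq_mul_inv]

end Diagonal

lemma neg_one_pow_sq {R : Type*} [Monoid R] [HasDistribNeg R] (k : ℕ) :
    ((-1 : R) ^ k) ^ 2 = 1 := by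
  rw [← pow_mul, mul_comm, pow_mul, neg_one_sq, one_pow]

def bondPhase (x : ℂ) : ℂ := cexp (π * I / 4 * (1 + x))

lemma bondPhase_ne_zero (x : ℂ) : bondPhase x ≠ 0 := Complex.exp_ne_zero _

lemma bondPhase_div_bondPhase_neg {x : ℂ} (hx : x ^ 2 = 1) :
    bondPhase x / bondPhase (-x) = I * x := by
  rw [bondPhase, bondPhase, ← Complex.exp_sub,
    show π * I / 4 * (1 + x) - π * I / 4 * (1 + -x) = x * (π / 2 * I) by ring]
  rcases sq_eq_one_iff.mp hx with rfl | rfl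
  · simp
  · simp [Complex.exp_neg]

section Chain

variable {N : ℕ}

lemma Fin.one_ne_zero_of_even [NeZero N] (hN : Even N) : (1 : Fin N) ≠ 0 :=
  fun h => Nat.not_even_one (Fin.one_eq_zero_iff.mp h ▸ hN)

lemma epsSign_sq (j : Fin N) : epsSign N j ^ 2 = 1 := neg_one_pow_sq _

lemma epsSign_add (hN : Even N) (a b : Fin N) :
    epsSign N (a + b) = epsSign N a * epsSign N b := by
  rw [epsSign, epsSign, epsSign, ← pow_add, Fin.val_add, neg_one_pow_eq_pow_mod_two,
    Nat.mod_mod_of_dvd _ hN.two_dvd, ← neg_one_pow_eq_pow_mod_two]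

lemma epsSign_one [NeZero N] (hN : Even N) : epsSign N 1 = -1 := by
  rw [epsSign, Fin.val_one', neg_one_pow_eq_pow_mod_two, Nat.mod_mod_of_dvd _ hN.two_dvd]
  norm_num

lemma epsSign_sub_one [NeZero N] (hN : Even N) (j : Fin N) :
    epsSign N (j - 1) = -epsSign N j := by
  have h := epsSign_add hN (j - 1) 1
  rw [sub_add_cancel, epsSign_one hN] at h
  rw [h, mul_neg_one, neg_neg]

def spin (s : Conf N) (j : Fin N) : ℂ := (-1) ^ (s j : ℕ)

lemma PZ_eq_diagonal_spin (j : Fin N) : PZ N j = diagonal fun s => spin s j := rfl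

lemma spin_sq (s : Conf N) (j : Fin N) : spin s j ^ 2 = 1 := neg_one_pow_sq _

lemma spin_eq_of_eq {s t : Conf N} {k : Fin N} (h : t k = s k) : spin t k = spin s k := by
  rw [spin, spin, h]

lemma spin_of_ne {s t : Conf N} {j : Fin N} (h : t j ≠ s j) : spin t j = -spin s j := by
  unfold spin
  generalize s j = a, t j = b at h
  fin_cases a <;> fin_cases b <;> simp_all

def entanglerPhase (N : ℕ) [NeZero N] (s : Conf N) : ℂ :=
  ∏ j, bondPhase (epsSign N j * (spin s j * spin s (j + 1)))

variable [NeZero N]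

lemma entangler_eq_diagonal : entangler N = diagonal (entanglerPhase N) := by
  have hfactor (j : Fin N) :
      exp ((π * I / 4) • ((1 : Matrix (Conf N) (Conf N) ℂ) +
          epsSign N j • (PZ N j * PZ N (j + 1)))) =
        diagonal fun s => bondPhase (epsSign N j * (spin s j * spin s (j + 1))) := by
    rw [PZ_eq_diagonal_spin, PZ_eq_diagonal_spin, diagonal_mul_diagonal, ← diagonal_smul,
      ← diagonal_one, diagonal_add, ← diagonal_smul, exp_diagonal]
    congr 1
    funext s
    simp [bondPhase, Complex.exp_eq_exp_ℂ]
  simp_rw [entangler, hfactor]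
  exact prod_ofFn_diagonal _

lemma entanglerPhase_ne_zero (s : Conf N) : entanglerPhase N s ≠ 0 :=
  Finset.prod_ne_zero_iff.mpr fun _ _ => bondPhase_ne_zero _

lemma entanglerPhase_div_of_flip (hN : Even N) {s t : Conf N} {j : Fin N}
    (hsame : ∀ i, i ≠ j → t i = s i) (hflip : t j ≠ s j) :
    entanglerPhase N s / entanglerPhase N t = spin s (j - 1) * spin s (j + 1) := by
  have hprev : j - 1 ≠ j := by simpa using Fin.one_ne_zero_of_even hN
  have hnext : j + 1 ≠ j := by simpa using Fin.one_ne_zero_of_even hN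
  have hspin {k : Fin N} (hk : k ≠ j) : spin t k = spin s k := spin_eq_of_eq (hsame k hk)
  rw [entanglerPhase, entanglerPhase, ← Finset.prod_div_distrib,
    Fintype.prod_eq_mul (j - 1) j hprev]
  · rw [sub_add_cancel, hspin hprev, hspin hnext, spin_of_ne hflip, mul_neg, mul_neg, neg_mul,
      mul_neg, bondPhase_div_bondPhase_neg, bondPhase_div_bondPhase_neg, epsSign_sub_one hN]
    · linear_combination
        (-(epsSign N j ^ 2 * spin s (j - 1) * spin s j ^ 2 * spin s (j + 1))) * I_sq
          + (spin s (j - 1) * spin s j ^ 2 * spin s (j + 1)) * epsSign_sq j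
          + (spin s (j - 1) * spin s (j + 1)) * spin_sq s j
    all_goals rw [mul_pow, mul_pow, epsSign_sq, spin_sq, spin_sq]; norm_num
  · rintro k ⟨hk_prev, hk⟩
    have hk_next : k + 1 ≠ j := fun h => hk_prev (eq_sub_of_add_eq h)
    rw [hspin hk, hspin hk_next, div_self (bondPhase_ne_zero _)]

lemma entanglerPhase_mul_PX_div (hN : Even N) (j : Fin N) (s t : Conf N) :
    entanglerPhase N s * PX N j s t / entanglerPhase N t =
      spin s (j - 1) * PX N j s t * spin t (j + 1) := by
  by_cases h : (∀ i, i ≠ j → t i = s i) ∧ t j ≠ s j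
  · have hnext : spin t (j + 1) = spin s (j + 1) :=
      spin_eq_of_eq (h.1 _ (by simpa using Fin.one_ne_zero_of_even hN))
    rw [PX, if_pos h, mul_one, mul_one, entanglerPhase_div_of_flip hN h.1 h.2, hnext]
  · simp [PX, if_neg h]

end Chain

theorem entangler_conjugation_general (N : ℕ) [NeZero N] (hNeven : Even N) :
    IsUnit (entangler N) ∧
    (∀ j : Fin N, entangler N * PZ N j = PZ N j * entangler N) ∧
    (∀ j : Fin N,
      entangler N * PX N j * (entangler N)⁻¹ = PZ N (j - 1) * PX N j * PZ N (j + 1)) := by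
  have hphase := entanglerPhase_ne_zero (N := N)
  simp only [entangler_eq_diagonal, PZ_eq_diagonal_spin]
  refine ⟨isUnit_diagonal.mpr (Pi.isUnit_iff.mpr fun s => (hphase s).isUnit),
    fun j => commute_diagonal _ _, fun j => ?_⟩
  rw [diagonal_mul_mul_inv_diagonal hphase]
  ext s t
  simpa [diagonal_mul, mul_diagonal] using entanglerPhase_mul_PX_div hNeven j s t

/-- for even `N ≥ 4`, the SPT entangler `V` is invertible,
commutes with every `Z j`, and conjugates each `X j` to
`Z (j-1) * X j * Z (j+1)`; hence `V` is a finite-depth local unitary realizing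
the SPT-stacking operation `T : σ_j^x ↦ σ_{j-1}^z σ_j^x σ_{j+1}^z`. -/
theorem entangler_conjugation (N : ℕ) [NeZero N] (hN : 4 ≤ N) (hNeven : Even N) :
    IsUnit (entangler N) ∧
    (∀ j : Fin N, entangler N * PZ N j = PZ N j * entangler N) ∧
    (∀ j : Fin N,
      entangler N * PX N j * (entangler N)⁻¹ = PZ N (j - 1) * PX N j * PZ N (j + 1)) :=
  entangler_conjugation_general N hNeven

end
end
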